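/- Let S be a monoid, A an S-act, and Σ = Σ(X) a set of equations over A. Then Σ is consistent if and only if for all equations xs = a and yt = b in Σ (with a, b ∈ A) and all v, w ∈ S, if xsv ρ_Σ ytw in F_S(X) then av = bw. -/

import Mathlib

universe u v w

/-- A right `S`-act: a set with an action `A × S → A` with `a·1 = a`, `a·(st) = (a·s)·t`. -/
class RAct (S : Type u) [Monoid S] (A : Type v) where
  act : A → S → A
  act_one : ∀ a : A, act a 1 = a
  act_mul : ∀ (a : A) (s t : S), act a (s * t) = act (act a s) t

infixl:70 " ⊳ " => RAct.act

/-- An `S`-morphism of right `S`-acts. -/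
def IsRActHom (S : Type u) [Monoid S] {A : Type v} {B : Type w}
    [RAct S A] [RAct S B] (f : A → B) : Prop :=
  ∀ (a : A) (s : S), f (a ⊳ s) = f a ⊳ s

/-- The free `S`-act `F_S(X) = X × S`, with `(x,s)·t = (x, st)`. -/
instance freeAct (S : Type u) [Monoid S] (X : Type w) : RAct S (X × S) where
  act p s := (p.1, p.2 * s)
  act_one p := by simp
  act_mul p s t := by simp [mul_assoc]

/-- Disjoint union of two `S`-acts. -/
instance sumAct (S : Type u) [Monoid S] {A : Type v} {B : Type w} [RAct S A] [RAct S B] :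
    RAct S (A ⊕ B) where
  act x s := Sum.elim (fun a => Sum.inl (a ⊳ s)) (fun b => Sum.inr (b ⊳ s)) x
  act_one := by rintro (a | b) <;> simp [RAct.act_one]
  act_mul := by rintro (a | b) s t <;> simp [RAct.act_mul]

/-- Congruence on a right `S`-act. -/
structure IsActCongr (S : Type u) [Monoid S] {A : Type v} [RAct S A]
    (r : A → A → Prop) : Prop where
  refl : ∀ a, r a a
  symm : ∀ {a b}, r a b → r b a
  trans : ∀ {a b c}, r a b → r b c → r a c
  act : ∀ {a b} (s : S), r a b → r (a ⊳ s) (b ⊳ s)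

/-- The act congruence generated by a set of pairs `H`. -/
def congGen (S : Type u) [Monoid S] {A : Type v} [RAct S A]
    (H : Set (A × A)) (a b : A) : Prop :=
  ∀ r : A → A → Prop, IsActCongr S r → (∀ p ∈ H, r p.1 p.2) → r a b

theorem isActCongr_congGen (S : Type u) [Monoid S] {A : Type v} [RAct S A]
    (H : Set (A × A)) : IsActCongr S (congGen S H) where
  refl a := fun _r hr _ => hr.refl a
  symm h := fun r hr hH => hr.symm (h r hr hH)
  trans h1 h2 := fun r hr hH => hr.trans (h1 r hr hH) (h2 r hr hH)
  act s h := fun r hr hH => hr.act s (h r hr hH)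

/-- Equations over an `S`-act `A` with variables from `X`:
`xs = yt` (which includes `xs = xt`) or `xs = a`. -/
inductive Eqn (S : Type u) (A : Type v) (X : Type w) where
  | vv : X → S → X → S → Eqn S A X
  | vc : X → S → A → Eqn S A X

/-- `b : X → C` is a solution of `E` in the act `C`, where `ι : A → C` interprets constants. -/
def IsSolution (S : Type u) [Monoid S] {A : Type v} {X : Type w} {C : Type*}
    [RAct S C] (ι : A → C) (E : Set (Eqn S A X)) (b : X → C) : Prop :=
  (∀ x s y t, Eqn.vv x s y t ∈ E → b x ⊳ s = b y ⊳ t) ∧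
  (∀ x s a, Eqn.vc x s a ∈ E → b x ⊳ s = ι a)

/-- A set of equations over `A` is consistent if it has a solution in some act containing `A`. -/
def Consistent (S : Type u) [Monoid S] {A : Type v} {X : Type w} [RAct S A]
    (E : Set (Eqn S A X)) : Prop :=
  ∃ (B : Type (max u v w)) (_ : RAct S B) (ι : A → B),
    Function.Injective ι ∧ IsRActHom S ι ∧ ∃ b : X → B, IsSolution S ι E b

/-- `A` is `n`-absolutely pure: every finite consistent system of equations over `A`
in at most `n` variables has a solution in `A`. -/
def NPure (S : Type u) [Monoid S] (A : Type v) [RAct S A] (n : ℕ) : Prop :=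
  ∀ E : Set (Eqn S A (Fin n)), E.Finite → Consistent S E →
    ∃ c : Fin n → A, IsSolution S id E c

/-- Almost pure: 1-absolutely pure. -/
def AlmostPure (S : Type u) [Monoid S] (A : Type v) [RAct S A] : Prop :=
  NPure S A 1

/-- Absolutely pure: `n`-absolutely pure for every `n`. -/
def AbsolutelyPure (S : Type u) [Monoid S] (A : Type v) [RAct S A] : Prop :=
  ∀ n : ℕ, NPure S A n

/-- The pairs `H(Σ)` in the free act coming from constant-free equations of `E`. -/
def Hcf (S : Type u) [Monoid S] {A : Type v} {X : Type w}
    (E : Set (Eqn S A X)) : Set ((X × S) × (X × S)) :=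
  {p | ∃ x u y v, Eqn.vv x u y v ∈ E ∧ p = ((x, u), (y, v))}

/-- The pairs `H(Σ) ∪ K(Σ)` on the disjoint union `A ⊔ F_S(X)`. -/
def HK (S : Type u) [Monoid S] {A : Type v} {X : Type w}
    (E : Set (Eqn S A X)) : Set ((A ⊕ X × S) × (A ⊕ X × S)) :=
  {p | (∃ x u y v, Eqn.vv x u y v ∈ E ∧ p = (Sum.inr (x, u), Sum.inr (y, v))) ∨
       (∃ x s a, Eqn.vc x s a ∈ E ∧ p = (Sum.inr (x, s), Sum.inl a))}

/-- Quotient of an act by a generated congruence. -/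
instance quotAct (S : Type u) [Monoid S] {A : Type v} [RAct S A] (H : Set (A × A)) :
    RAct S (Quot (congGen S H)) where
  act q s := Quot.map (fun a => a ⊳ s) (fun _a _b h => (isActCongr_congGen S H).act s h) q
  act_one := by
    rintro ⟨a⟩
    show Quot.mk _ (a ⊳ (1 : S)) = Quot.mk _ a
    rw [RAct.act_one]
  act_mul := by
    rintro ⟨a⟩ s t
    show Quot.mk _ (a ⊳ (s * t)) = Quot.mk _ (a ⊳ s ⊳ t)
    rw [RAct.act_mul]

/-- The canonical extension `A(Σ) = (A ⊔ F_S(X)) / κ_Σ`. -/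
abbrev ActExt (S : Type u) [Monoid S] {A : Type v} {X : Type w} [RAct S A]
    (E : Set (Eqn S A X)) : Type (max u v w) :=
  Quot (congGen S (HK S E))

/-- The natural map `ν_Σ : A → A(Σ)`. -/
def extOfBase (S : Type u) [Monoid S] {A : Type v} {X : Type w} [RAct S A]
    (E : Set (Eqn S A X)) (a : A) : ActExt S E :=
  Quot.mk _ (Sum.inl a)

/-- A finitely generated `S`-act. -/
def IsFG (S : Type u) [Monoid S] (A : Type v) [RAct S A] : Prop :=
  ∃ T : Finset A, ∀ a : A, ∃ t ∈ T, ∃ s : S, a = t ⊳ s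

/-- A monogenic (cyclic) `S`-act. -/
def Monogenic (S : Type u) [Monoid S] (C : Type v) [RAct S C] : Prop :=
  ∃ c : C, ∀ y : C, ∃ s : S, y = c ⊳ s

/-- `A` embeds into `C` as an `S`-act. -/
def ActEmbeds (S : Type u) [Monoid S] (A : Type v) (C : Type w) [RAct S A] [RAct S C] : Prop :=
  ∃ ι : A → C, IsRActHom S ι ∧ Function.Injective ι

/-- A finitely presented `S`-act: isomorphic to `F_S(X)/ρ` with `X` finite and
`ρ` a finitely generated congruence. -/
def IsFP (S : Type u) [Monoid S] (A : Type v) [RAct S A] : Prop :=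
  ∃ (n : ℕ) (H : Set ((Fin n × S) × (Fin n × S))), H.Finite ∧
    ∃ φ : Fin n × S → A, IsRActHom S φ ∧ Function.Surjective φ ∧
      ∀ p q : Fin n × S, φ p = φ q ↔ congGen S H p q

/-- A right coherent monoid. -/
def RightCoherent (S : Type u) [Monoid S] : Prop :=
  ∀ (A B : Type u) (_ : RAct S A) (_ : RAct S B) (ι : B → A),
    IsRActHom S ι → Function.Injective ι → IsFP S A → IsFG S B → IsFP S B

/-- The fem-property: every finitely generated `S`-act embeds into a monogenic act. -/
def FemProperty (S : Type u) [Monoid S] : Prop :=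
  ∀ (A : Type u) (_ : RAct S A), IsFG S A → ∃ (C : Type u) (_ : RAct S C),
    Monogenic S C ∧ ActEmbeds S A C

/-- A subact of an `S`-act. -/
structure Subact (S : Type u) [Monoid S] (B : Type v) [RAct S B] where
  carrier : Set B
  closed : ∀ b ∈ carrier, ∀ s : S, b ⊳ s ∈ carrier

instance subAct (S : Type u) [Monoid S] {B : Type v} [RAct S B] (T : Subact S B) :
    RAct S T.carrier where
  act a s := ⟨a.1 ⊳ s, T.closed a.1 a.2 s⟩
  act_one a := Subtype.ext (RAct.act_one a.1)
  act_mul a s t := Subtype.ext (RAct.act_mul a.1 s t)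


def BuiltFrom (S : Type u) [Monoid S] {A B : Type v} [RAct S A] [RAct S B]
    (ι : A → B) (P : ℕ → Prop) : Prop :=
  IsRActHom S ι ∧ Function.Injective ι ∧
  ∃ (ξ : Ordinal.{v}) (C : Ordinal.{v} → Subact S B),
    (C 0).carrier = Set.range ι ∧
    (∀ i j : Ordinal.{v}, i ≤ j → (C i).carrier ⊆ (C j).carrier) ∧
    (C ξ).carrier = Set.univ ∧
    (∀ ζ : Ordinal.{v}, ζ ≤ ξ → Order.IsSuccLimit ζ → (C ζ).carrier = ⋃ i ∈ Set.Iio ζ, (C i).carrier) ∧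
    (∀ i : Ordinal.{v}, i < ξ → ∃ m : ℕ, P m ∧
      (∃ E : Set (Eqn S (↥(C i).carrier) (Fin m)), Consistent S E ∧
        (∃ e : ActExt S E → B, IsRActHom S e ∧ Function.Injective e ∧
          Set.range e = (C (i + 1)).carrier ∧
          (∀ d : ↥(C i).carrier, e (extOfBase S E d) = d.1))))


section ConsistencyAux

variable {S : Type u} [Monoid S] {A : Type v} {X : Type w} [RAct S A] (E : Set (Eqn S A X))

/-- `p` in the free act is ρ-related to an instance of a constant equation with value `a`. -/
def Dval (p : X × S) (a : A) : Prop :=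
  ∃ x s a₀ v, Eqn.vc x s a₀ ∈ E ∧ congGen S (Hcf S E) p (x, s * v) ∧ a = a₀ ⊳ v

variable {E}

/-- The consistency criterion hypothesis. -/
def Hyp : Prop :=
  ∀ (x y : X) (s t : S) (a b : A) (v w : S),
    Eqn.vc x s a ∈ E → Eqn.vc y t b ∈ E →
    congGen S (Hcf S E) (x, s * v) (y, t * w) → a ⊳ v = b ⊳ w

theorem Dval_unique (h : Hyp (E := E)) {p q : X × S} {a b : A}
    (hpq : congGen S (Hcf S E) p q) (ha : Dval E p a) (hb : Dval E q b) : a = b := by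
  obtain ⟨x, s, a₀, v, hxs, hρ1, rfl⟩ := ha
  obtain ⟨y, t, b₀, w, hyt, hρ2, rfl⟩ := hb
  have C := isActCongr_congGen S (Hcf S E)
  exact h x y s t a₀ b₀ v w hxs hyt (C.trans (C.symm hρ1) (C.trans hpq hρ2))

theorem Dval_of_rel {p q : X × S} {a : A}
    (hpq : congGen S (Hcf S E) q p) (ha : Dval E p a) : Dval E q a := by
  obtain ⟨x, s, a₀, v, hxs, hρ1, rfl⟩ := ha
  exact ⟨x, s, a₀, v, hxs, (isActCongr_congGen S (Hcf S E)).trans hpq hρ1, rfl⟩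

theorem Dval_act {p : X × S} {a : A} (ha : Dval E p a) (r : S) :
    Dval E (p.1, p.2 * r) (a ⊳ r) := by
  obtain ⟨x, s, a₀, v, hxs, hρ1, rfl⟩ := ha
  refine ⟨x, s, a₀, v * r, hxs, ?_, by rw [RAct.act_mul]⟩
  have := (isActCongr_congGen S (Hcf S E)).act r hρ1
  show congGen S (Hcf S E) (p.1, p.2 * r) (x, s * (v * r))
  rw [← mul_assoc]
  exact this

/-- Explicit congruence on `A ⊕ F_S(X)` used to show `ν` is injective. -/
def bigR (E : Set (Eqn S A X)) : (A ⊕ X × S) → (A ⊕ X × S) → Prop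
  | Sum.inl a, Sum.inl b => a = b
  | Sum.inl a, Sum.inr p => Dval E p a
  | Sum.inr p, Sum.inl a => Dval E p a
  | Sum.inr p, Sum.inr q =>
      congGen S (Hcf S E) p q ∨ ∃ a, Dval E p a ∧ Dval E q a

theorem bigR_isActCongr (h : Hyp (E := E)) : IsActCongr S (bigR E) := by
  have C := isActCongr_congGen S (Hcf S E)
  constructor
  · rintro (a | p)
    · rfl
    · exact Or.inl (C.refl p)
  · rintro (a | p) (b | q) hr
    · exact hr.symm
    · exact hr
    · exact hr
    · rcases hr with h1 | ⟨a, h1, h2⟩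
      · exact Or.inl (C.symm h1)
      · exact Or.inr ⟨a, h2, h1⟩
  · rintro (a | p) (b | q) (c | m) h1 h2
    · exact h1.trans h2
    · exact h1 ▸ h2
    · exact Dval_unique h (C.refl q) h1 h2
    · rcases h2 with h2 | ⟨d, h2, h3⟩
      · exact Dval_of_rel (C.symm h2) h1
      · have : a = d := Dval_unique h (C.refl q) h1 h2
        exact this ▸ h3
    · exact h2 ▸ h1
    · exact Or.inr ⟨b, h1, h2⟩
    · rcases h1 with h1 | ⟨d, hd1, hd2⟩
      · exact Dval_of_rel h1 h2
      · have : d = c := Dval_unique h (C.refl q) hd2 h2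
        exact this ▸ hd1
    · rcases h1 with h1 | ⟨d, hd1, hd2⟩
      · rcases h2 with h2 | ⟨e, he1, he2⟩
        · exact Or.inl (C.trans h1 h2)
        · exact Or.inr ⟨e, Dval_of_rel h1 he1, he2⟩
      · rcases h2 with h2 | ⟨e, he1, he2⟩
        · exact Or.inr ⟨d, hd1, Dval_of_rel (C.symm h2) hd2⟩
        · have : d = e := Dval_unique h (C.refl q) hd2 he1
          exact Or.inr ⟨d, hd1, this ▸ he2⟩
  · rintro (a | p) (b | q) s hr
    · exact congrArg (· ⊳ s) hr
    · exact Dval_act hr s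
    · exact Dval_act hr s
    · rcases hr with h1 | ⟨a, h1, h2⟩
      · exact Or.inl (C.act s h1)
      · exact Or.inr ⟨a ⊳ s, Dval_act h1 s, Dval_act h2 s⟩

end ConsistencyAux

/-- Consistency criterion for a system of equations over an act. -/
theorem consistent_iff (S : Type u) [Monoid S] (A : Type v) (X : Type w)
    [RAct S A] (E : Set (Eqn S A X)) :
    Consistent S E ↔
      ∀ (x y : X) (s t : S) (a b : A) (v w : S),
        Eqn.vc x s a ∈ E → Eqn.vc y t b ∈ E →
        congGen S (Hcf S E) (x, s * v) (y, t * w) → a ⊳ v = b ⊳ w := by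
  constructor
  · rintro ⟨B, _, ι, hinj, hhom, b, hsol⟩ x y s t a c v w hxa hyc hcg
    -- interpret the congruence via the solution
    have key : b x ⊳ (s * v) = b y ⊳ (t * w) := by
      have := hcg (fun p q => b p.1 ⊳ p.2 = b q.1 ⊳ q.2)
        ⟨fun _ => rfl, fun h => h.symm, fun h1 h2 => h1.trans h2,
         fun {p q} r h => by
           show b p.1 ⊳ (p.2 * r) = b q.1 ⊳ (q.2 * r)
           rw [RAct.act_mul, RAct.act_mul, h]⟩
        (by
          rintro ⟨⟨x', u⟩, ⟨y', v'⟩⟩ ⟨x'', u', y'', v'', hE, heq⟩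
          obtain ⟨h1, h2⟩ := Prod.mk.injEq .. ▸ heq
          simp only [Prod.mk.injEq] at heq
          obtain ⟨⟨rfl, rfl⟩, ⟨rfl, rfl⟩⟩ := heq
          exact hsol.1 _ _ _ _ hE)
      exact this
    have h1 : b x ⊳ s = ι a := hsol.2 _ _ _ hxa
    have h2 : b y ⊳ t = ι c := hsol.2 _ _ _ hyc
    apply hinj
    rw [hhom, hhom, ← h1, ← h2, ← RAct.act_mul, ← RAct.act_mul, key]
  · intro h
    refine ⟨ActExt S E, inferInstance, extOfBase S E, ?_, ?_,
      fun x => Quot.mk _ (Sum.inr (x, 1)), ?_, ?_⟩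
    · -- injectivity via the explicit congruence bigR
      intro a c hac
      have hR := bigR_isActCongr (E := E) (S := S) (by exact h)
      have : bigR E (Sum.inl a) (Sum.inl c) := by
        have heq := Quot.eqvGen_exact hac
        have step : ∀ p q : A ⊕ X × S,
            Relation.EqvGen (congGen S (HK S E)) p q → bigR E p q := by
          intro p q hpq
          induction hpq with
          | rel p q hr =>
            refine hr (bigR E) hR ?_
            rintro ⟨p1, p2⟩ hp
            rcases hp with ⟨x', u, y', v', hE, heq⟩ | ⟨x', s', a', hE, heq⟩
            · simp only [Prod.mk.injEq] at heq
              obtain ⟨rfl, rfl⟩ := heq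
              exact Or.inl (fun r hr hH => hH _ ⟨x', u, y', v', hE, rfl⟩)
            · simp only [Prod.mk.injEq] at heq
              obtain ⟨rfl, rfl⟩ := heq
              exact ⟨x', s', a', 1, hE,
                by rw [mul_one]; exact (isActCongr_congGen S (Hcf S E)).refl _,
                (RAct.act_one a').symm⟩
          | refl p => exact hR.refl p
          | symm p q _ ih => exact hR.symm ih
          | trans p q r _ _ ih1 ih2 => exact hR.trans ih1 ih2
        exact step _ _ heq
      exact this
    · -- ι is an S-morphism
      intro a s
      rfl
    · -- vv equations are solved
      intro x s y t hE
      show Quot.mk _ (Sum.inr (x, 1 * s)) = Quot.mk _ (Sum.inr (y, 1 * t))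
      rw [one_mul, one_mul]
      exact Quot.sound (fun r hr hH => hH _ (Or.inl ⟨x, s, y, t, hE, rfl⟩))
    · -- vc equations are solved
      intro x s a hE
      show Quot.mk _ (Sum.inr (x, 1 * s)) = Quot.mk _ (Sum.inl a)
      rw [one_mul]
      exact Quot.sound (fun r hr hH => hH _ (Or.inr ⟨x, s, a, hE, rfl⟩))
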